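/- There exists a constant C > 0, depending only on φ, such that for all α > 0 and all P, y ∈ ℝ³: ‖Π₁ w_{P,y}‖² ≤ C (|y|⁴ + α^{−4} |P|² |y|²). -/

import Mathlib

open MeasureTheory
open scoped RealInnerProductSpace ENNReal

noncomputable section

namespace PolaronStmt11

variable (φ : EuclideanSpace ℝ (Fin 3) → ℝ)

/-- The Landau–Pekar constant `M^LP := (2/3)‖∇φ‖²`. -/
def MLP : ℝ := (2 / 3) * ∫ x, ‖gradient φ x‖ ^ 2

/-- `ξ_P := (α² M^LP)⁻¹ (P·∇)φ`. -/
def xiP (α : ℝ) (P : EuclideanSpace ℝ (Fin 3)) :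
    EuclideanSpace ℝ (Fin 3) → ℝ :=
  fun x => (α ^ 2 * MLP φ)⁻¹ * fderiv ℝ φ x P

/-- `φ_P := φ + i ξ_P`. -/
def phiP (α : ℝ) (P : EuclideanSpace ℝ (Fin 3)) :
    EuclideanSpace ℝ (Fin 3) → ℂ :=
  fun x => (φ x : ℂ) + Complex.I * (xiP φ α P x : ℂ)

/-- `w_{P,y} := φ_P − T_{−y} φ_P`. -/
def wP (α : ℝ) (P y : EuclideanSpace ℝ (Fin 3)) :
    EuclideanSpace ℝ (Fin 3) → ℂ :=
  fun x => phiP φ α P x - phiP φ α P (x - y)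

/-- The squared `L²`-norm of `Π₁ f`, where `Π₁` is the orthogonal projection of
`L²(ℝ³; ℂ)` onto the orthogonal complement of `span{∂₁φ, ∂₂φ, ∂₃φ}`: it equals
the squared `L²`-distance from `f` to that span. -/
def Pi1NormSq (f : EuclideanSpace ℝ (Fin 3) → ℂ) : ℝ :=
  ⨅ c : Fin 3 → ℂ, ∫ z, ‖f z - ∑ i : Fin 3,
    c i * (fderiv ℝ φ z (EuclideanSpace.single i (1 : ℝ)) : ℂ)‖ ^ 2

/-! ### Auxiliary material -/

local notation "𝔼" => EuclideanSpace ℝ (Fin 3)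

section Aux

variable {f : 𝔼 → ℝ}

lemma norm_add_I_mul_sq (a b : ℝ) : ‖(a:ℂ) + Complex.I * b‖ ^ 2 = a ^ 2 + b ^ 2 := by
  rw [Complex.sq_norm]
  simp [Complex.normSq_apply]
  ring

lemma hasDerivAt_line (hg : Differentiable ℝ f) (z y : 𝔼) (t : ℝ) :
    HasDerivAt (fun s : ℝ => f (z - s • y)) (-(fderiv ℝ f (z - t • y) y)) t := by
  have h1 : HasDerivAt (fun s : ℝ => z - s • y) (-y) t := by
    simpa using (((hasDerivAt_id t).smul_const y).const_sub z)
  have h2 := ((hg (z - t • y)).hasFDerivAt).comp_hasDerivAt t h1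
  simpa [Function.comp_def] using h2

lemma continuous_fderiv_apply (hf : ContDiff ℝ (⊤ : ℕ∞) f) (v : 𝔼) :
    Continuous (fun x => fderiv ℝ f x v) :=
  (hf.continuous_fderiv (by norm_cast)).clm_apply continuous_const

lemma contDiff_fderiv_apply (hf : ContDiff ℝ (⊤ : ℕ∞) f) (v : 𝔼) :
    ContDiff ℝ (⊤ : ℕ∞) (fun x => fderiv ℝ f x v) :=
  (hf.fderiv_right (m := ((⊤:ℕ∞) : WithTop ℕ∞)) (by simp)).clm_apply contDiff_const

lemma line_repr (hf : ContDiff ℝ (⊤ : ℕ∞) f) (z y : 𝔼) (a b : ℝ) :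
    f (z - a • y) - f (z - b • y) = ∫ t in a..b, fderiv ℝ f (z - t • y) y := by
  have hcont : Continuous fun t : ℝ => fderiv ℝ f (z - t • y) y :=
    (continuous_fderiv_apply hf y).comp (continuous_const.sub (continuous_id.smul continuous_const))
  have h := intervalIntegral.integral_eq_sub_of_hasDerivAt
    (f := fun s : ℝ => f (z - s • y))
    (f' := fun t : ℝ => -(fderiv ℝ f (z - t • y) y))
    (fun t _ => hasDerivAt_line (hf.differentiable (by norm_cast)) z y t)
    (hcont.neg.intervalIntegrable a b)
  rw [intervalIntegral.integral_neg] at h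
  linarith

lemma Q_eq (hf : ContDiff ℝ (⊤ : ℕ∞) f) (v w x : 𝔼) :
    fderiv ℝ (fun u => fderiv ℝ f u v) x w = iteratedFDeriv ℝ 2 f x ![w, v] := by
  rw [fderiv_clm_apply
      ((hf.fderiv_right (m := ((⊤:ℕ∞) : WithTop ℕ∞)) (by simp)).differentiable (by norm_cast) x)
      (differentiableAt_const v), iteratedFDeriv_two_apply]
  simp

lemma Q_bound (hf : ContDiff ℝ (⊤ : ℕ∞) f) (v w x : 𝔼) :
    |fderiv ℝ (fun u => fderiv ℝ f u v) x w| ≤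
      ‖iteratedFDeriv ℝ 2 f x‖ * (‖v‖ * ‖w‖) := by
  rw [Q_eq hf]
  have := (iteratedFDeriv ℝ 2 f x).le_opNorm ![w, v]
  rw [Fin.prod_univ_two] at this
  simp only [Matrix.cons_val_zero, Matrix.cons_val_one, Matrix.head_cons] at this
  calc |iteratedFDeriv ℝ 2 f x ![w, v]| = ‖iteratedFDeriv ℝ 2 f x ![w, v]‖ := rfl
    _ ≤ ‖iteratedFDeriv ℝ 2 f x‖ * (‖w‖ * ‖v‖) := this
    _ = ‖iteratedFDeriv ℝ 2 f x‖ * (‖v‖ * ‖w‖) := by ring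

lemma Q_cont (hf : ContDiff ℝ (⊤ : ℕ∞) f) (v w : 𝔼) :
    Continuous fun x => fderiv ℝ (fun u => fderiv ℝ f u v) x w :=
  continuous_fderiv_apply (contDiff_fderiv_apply hf v) w

lemma B_cont (hf : ContDiff ℝ (⊤ : ℕ∞) f) :
    Continuous fun x => ‖iteratedFDeriv ℝ 2 f x‖ :=
  (hf.continuous_iteratedFDeriv
    (by norm_cast : ((2:ℕ) : WithTop ℕ∞) ≤ ((⊤:ℕ∞) : WithTop ℕ∞))).norm

/-- First-order difference bound. -/
lemma diff_bound (hf : ContDiff ℝ (⊤ : ℕ∞) f) (z y v : 𝔼) :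
    |fderiv ℝ f z v - fderiv ℝ f (z - y) v| ≤
      (‖v‖ * ‖y‖) * ∫ t in (0:ℝ)..1, ‖iteratedFDeriv ℝ 2 f (z - t • y)‖ := by
  have hg := contDiff_fderiv_apply hf v
  have hline : Continuous fun t : ℝ => z - t • y :=
    continuous_const.sub (continuous_id.smul continuous_const)
  have hrep := line_repr hg z y 0 1
  simp only [zero_smul, sub_zero, one_smul] at hrep
  rw [hrep]
  have habs := intervalIntegral.abs_integral_le_integral_abs (μ := volume)
    (f := fun t : ℝ => fderiv ℝ (fun u => fderiv ℝ f u v) (z - t • y) y) zero_le_one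
  refine habs.trans ?_
  have hcont1 : Continuous fun t : ℝ =>
      |fderiv ℝ (fun u => fderiv ℝ f u v) (z - t • y) y| :=
    ((Q_cont hf v y).comp hline).abs
  have hcont2 : Continuous fun t : ℝ =>
      ‖iteratedFDeriv ℝ 2 f (z - t • y)‖ * (‖v‖ * ‖y‖) :=
    ((B_cont hf).comp hline).mul continuous_const
  have hmono : ∫ t in (0:ℝ)..1, |fderiv ℝ (fun u => fderiv ℝ f u v) (z - t • y) y| ≤
      ∫ t in (0:ℝ)..1, ‖iteratedFDeriv ℝ 2 f (z - t • y)‖ * (‖v‖ * ‖y‖) := by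
    refine intervalIntegral.integral_mono_on zero_le_one
      (hcont1.intervalIntegrable 0 1) (hcont2.intervalIntegrable 0 1) ?_
    intro t _
    simpa [mul_comm, mul_left_comm] using Q_bound hf v y (z - t • y)
  refine hmono.trans ?_
  rw [intervalIntegral.integral_mul_const]
  ring_nf
  exact le_rfl

/-- Second-order Taylor bound. -/
lemma taylor_bound (hf : ContDiff ℝ (⊤ : ℕ∞) f) (z y : 𝔼) :
    |f z - f (z - y) - fderiv ℝ f z y| ≤
      (‖y‖ * ‖y‖) * ∫ t in (0:ℝ)..1, ‖iteratedFDeriv ℝ 2 f (z - t • y)‖ := by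
  have hg := contDiff_fderiv_apply hf y
  have hline : Continuous fun t : ℝ => z - t • y :=
    continuous_const.sub (continuous_id.smul continuous_const)
  have hDcont : Continuous fun t : ℝ => fderiv ℝ f (z - t • y) y :=
    (continuous_fderiv_apply hf y).comp hline
  have hqcont : Continuous fun s : ℝ =>
      |fderiv ℝ (fun u => fderiv ℝ f u y) (z - s • y) y| :=
    ((Q_cont hf y y).comp hline).abs
  have hBc : Continuous fun s : ℝ =>
      ‖iteratedFDeriv ℝ 2 f (z - s • y)‖ * (‖y‖ * ‖y‖) :=
    ((B_cont hf).comp hline).mul continuous_const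
  set c : ℝ := (‖y‖ * ‖y‖) * ∫ t in (0:ℝ)..1, ‖iteratedFDeriv ℝ 2 f (z - t • y)‖ with hc
  -- inner bound: for t ∈ [0,1]
  have hinner : ∀ t ∈ Set.Icc (0:ℝ) 1, |fderiv ℝ f (z - t • y) y - fderiv ℝ f z y| ≤ c := by
    intro t ht
    have hrep2 := line_repr hg z y 0 t
    simp only [zero_smul, sub_zero] at hrep2
    rw [abs_sub_comm]
    have : |fderiv ℝ f z y - fderiv ℝ f (z - t • y) y| ≤
        ∫ s in (0:ℝ)..t, |fderiv ℝ (fun u => fderiv ℝ f u y) (z - s • y) y| := by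
      rw [hrep2]
      exact intervalIntegral.abs_integral_le_integral_abs ht.1
    refine this.trans ?_
    have h2 : ∫ s in (0:ℝ)..t, |fderiv ℝ (fun u => fderiv ℝ f u y) (z - s • y) y| ≤
        ∫ s in (0:ℝ)..1, |fderiv ℝ (fun u => fderiv ℝ f u y) (z - s • y) y| := by
      refine intervalIntegral.integral_mono_interval le_rfl ht.1 ht.2
        (Filter.Eventually.of_forall fun s => abs_nonneg _)
        (hqcont.intervalIntegrable 0 1)
    refine h2.trans ?_
    have h3 : ∫ s in (0:ℝ)..1, |fderiv ℝ (fun u => fderiv ℝ f u y) (z - s • y) y| ≤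
        ∫ s in (0:ℝ)..1, ‖iteratedFDeriv ℝ 2 f (z - s • y)‖ * (‖y‖ * ‖y‖) := by
      refine intervalIntegral.integral_mono_on zero_le_one
        (hqcont.intervalIntegrable 0 1) (hBc.intervalIntegrable 0 1) ?_
      intro s _
      simpa [mul_comm, mul_left_comm] using Q_bound hf y y (z - s • y)
    refine h3.trans ?_
    rw [intervalIntegral.integral_mul_const, hc]
    ring_nf
            
    exact le_rfl
  -- outer
  have hrep := line_repr hf z y 0 1
  simp only [zero_smul, sub_zero, one_smul] at hrep
  have hsplit : f z - f (z - y) - fderiv ℝ f z y =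
      ∫ t in (0:ℝ)..1, (fderiv ℝ f (z - t • y) y - fderiv ℝ f z y) := by
    rw [intervalIntegral.integral_sub (hDcont.intervalIntegrable 0 1)
      (intervalIntegrable_const), ← hrep]
    simp
  rw [hsplit]
  have habs := intervalIntegral.abs_integral_le_integral_abs (μ := volume)
    (f := fun t : ℝ => fderiv ℝ f (z - t • y) y - fderiv ℝ f z y) zero_le_one
  refine habs.trans ?_
  have : ∫ t in (0:ℝ)..1, |fderiv ℝ f (z - t • y) y - fderiv ℝ f z y| ≤
      ∫ t in (0:ℝ)..1, c := by
    refine intervalIntegral.integral_mono_on zero_le_one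
      ((hDcont.sub continuous_const).abs.intervalIntegrable 0 1)
      (intervalIntegrable_const) hinner
  simpa using this

/-- Cauchy–Schwarz on `[0,1]`. -/
lemma sq_intervalIntegral_le {g : ℝ → ℝ} (hg : Continuous g) (hgn : ∀ s, 0 ≤ g s) :
    (∫ t in (0:ℝ)..1, g t) ^ 2 ≤ ∫ t in (0:ℝ)..1, g t ^ 2 := by
  rw [intervalIntegral.integral_of_le zero_le_one, intervalIntegral.integral_of_le zero_le_one]
  set μ : Measure ℝ := volume.restrict (Set.Ioc (0:ℝ) 1) with hμ
  have hμuniv : μ Set.univ = 1 := by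
    rw [hμ, Measure.restrict_apply_univ, Real.volume_Ioc]; norm_num
  obtain ⟨C, hC⟩ := (isCompact_Icc (a := (0:ℝ)) (b := 1)).exists_bound_of_continuousOn
    hg.continuousOn
  have hmem : MemLp g 2 μ := by
    refine MemLp.of_bound (hg.aestronglyMeasurable.restrict) C ?_
    refine (ae_restrict_iff' measurableSet_Ioc).2 (Filter.Eventually.of_forall fun x hx => ?_)
    exact hC x (Set.Ioc_subset_Icc_self hx)
  have hone : MemLp (fun _ : ℝ => (1:ℝ)) 2 μ := memLp_const 1
  have hpq : Real.HolderConjugate 2 2 := Real.HolderConjugate.two_two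
  have h2 : ENNReal.ofReal (2:ℝ) = 2 := by norm_num
  have h := integral_mul_le_Lp_mul_Lq_of_nonneg hpq
    (Filter.Eventually.of_forall hgn)
    (Filter.Eventually.of_forall fun _ : ℝ => (zero_le_one : (0:ℝ) ≤ 1))
    (h2 ▸ hmem) (h2 ▸ hone)
  simp only [mul_one] at h
  have hone2 : ∫ _t : ℝ, (1:ℝ) ^ (2:ℝ) ∂μ = 1 := by
    simp [Real.one_rpow, Measure.real, hμuniv]
  have hg2 : (fun t => g t ^ (2:ℝ)) = fun t => g t ^ 2 := by
    funext t
    rw [show (2:ℝ) = ((2:ℕ):ℝ) by norm_num, Real.rpow_natCast]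
  rw [hg2, hone2, Real.one_rpow] at h
  have hnn : 0 ≤ ∫ t, g t ^ 2 ∂μ := integral_nonneg fun t => sq_nonneg _
  have hnn2 : 0 ≤ ∫ t, g t ∂μ := integral_nonneg hgn
  calc (∫ t, g t ∂μ) ^ 2 ≤ ((∫ t, g t ^ 2 ∂μ) ^ ((1:ℝ)/2) * 1) ^ 2 := by
        apply pow_le_pow_left₀ hnn2 (by simpa using h)
    _ = ∫ t, g t ^ 2 ∂μ := by
        rw [mul_one, ← Real.rpow_natCast ((∫ t, g t ^ 2 ∂μ) ^ ((1:ℝ)/2)) 2,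
          ← Real.rpow_mul hnn]
        norm_num

/-- Core `L²` estimate by translation invariance and Cauchy–Schwarz. -/
lemma core_lintegral (hf : ContDiff ℝ (⊤ : ℕ∞) f) (y : 𝔼) :
    ∫⁻ z, ENNReal.ofReal ((∫ t in (0:ℝ)..1, ‖iteratedFDeriv ℝ 2 f (z - t • y)‖) ^ 2)
      ≤ ∫⁻ x, ENNReal.ofReal (‖iteratedFDeriv ℝ 2 f x‖ ^ 2) := by
  have hBc := B_cont hf
  have step1 : ∀ z : 𝔼, ENNReal.ofReal ((∫ t in (0:ℝ)..1, ‖iteratedFDeriv ℝ 2 f (z - t • y)‖) ^ 2)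
      ≤ ∫⁻ t in Set.Ioc (0:ℝ) 1, ENNReal.ofReal (‖iteratedFDeriv ℝ 2 f (z - t • y)‖ ^ 2) := by
    intro z
    have hline : Continuous fun t : ℝ => z - t • y :=
      continuous_const.sub (continuous_id.smul continuous_const)
    have hcs := sq_intervalIntegral_le (g := fun t => ‖iteratedFDeriv ℝ 2 f (z - t • y)‖)
      (hBc.comp hline) (fun s => norm_nonneg _)
    refine (ENNReal.ofReal_le_ofReal hcs).trans ?_
    have hint : IntegrableOn (fun t : ℝ => ‖iteratedFDeriv ℝ 2 f (z - t • y)‖ ^ 2)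
        (Set.Ioc (0:ℝ) 1) volume := ((hBc.comp hline).pow 2).integrableOn_Ioc
    rw [intervalIntegral.integral_of_le zero_le_one,
      ofReal_integral_eq_lintegral_ofReal hint
        (Filter.Eventually.of_forall fun t => sq_nonneg _)]
  calc ∫⁻ z, ENNReal.ofReal ((∫ t in (0:ℝ)..1, ‖iteratedFDeriv ℝ 2 f (z - t • y)‖) ^ 2)
      ≤ ∫⁻ z, ∫⁻ t in Set.Ioc (0:ℝ) 1,
          ENNReal.ofReal (‖iteratedFDeriv ℝ 2 f (z - t • y)‖ ^ 2) := lintegral_mono step1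
    _ = ∫⁻ t in Set.Ioc (0:ℝ) 1, ∫⁻ z,
          ENNReal.ofReal (‖iteratedFDeriv ℝ 2 f (z - t • y)‖ ^ 2) := by
        refine lintegral_lintegral_swap ?_
        refine (ENNReal.continuous_ofReal.comp ?_).measurable.aemeasurable
        exact (hBc.comp (continuous_fst.sub (continuous_snd.smul continuous_const))).pow 2
    _ = ∫⁻ _t in Set.Ioc (0:ℝ) 1, ∫⁻ x, ENNReal.ofReal (‖iteratedFDeriv ℝ 2 f x‖ ^ 2) := by
        refine lintegral_congr fun t => ?_
        exact lintegral_sub_right_eq_self (fun x => ENNReal.ofReal (‖iteratedFDeriv ℝ 2 f x‖ ^ 2))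
          (t • y)
    _ = ∫⁻ x, ENNReal.ofReal (‖iteratedFDeriv ℝ 2 f x‖ ^ 2) := by
        rw [setLIntegral_const, Real.volume_Ioc]
        norm_num

lemma sum_single (y : 𝔼) : ∑ i : Fin 3, y i • EuclideanSpace.single i (1:ℝ) = y := by
  ext j
  simp [EuclideanSpace.single_apply, Pi.single_apply]

lemma norm_gradient_eq_iterated (f : 𝔼 → ℝ) (x : 𝔼) :
    ‖gradient f x‖ = ‖iteratedFDeriv ℝ 1 f x‖ := by
  unfold gradient
  rw [LinearIsometryEquiv.norm_map, ← norm_iteratedFDeriv_fderiv (n := 0),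
    norm_iteratedFDeriv_zero]

lemma K2_ne_top (h2 : MemLp (iteratedFDeriv ℝ 2 f) 2 volume) :
    (∫⁻ x, ENNReal.ofReal (‖iteratedFDeriv ℝ 2 f x‖ ^ 2)) ≠ ⊤ := by
  have h := lintegral_rpow_enorm_lt_top_of_eLpNorm_lt_top (by norm_num) (by norm_num) h2.2
  refine ne_of_lt ?_
  have he : ∀ v : 𝔼,
      ENNReal.ofReal (‖iteratedFDeriv ℝ 2 f v‖ ^ 2)
        = (‖iteratedFDeriv ℝ 2 f v‖ₑ) ^ ((2:ℝ≥0∞).toReal) := by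
    intro v
    rw [ENNReal.toReal_ofNat, ENNReal.ofReal_pow (norm_nonneg _), ofReal_norm_eq_enorm,
      ← ENNReal.rpow_natCast]
    norm_num
  simpa [he] using h

end Aux

lemma MLP_pos (hsmooth : ContDiff ℝ (⊤ : ℕ∞) φ)
    (h1 : MemLp (iteratedFDeriv ℝ 1 φ) 2 volume)
    (hgrad : ∃ x, gradient φ x ≠ 0) : 0 < MLP φ := by
  have hgc : Continuous (gradient φ) := by
    unfold gradient
    exact (LinearIsometryEquiv.continuous _).comp (hsmooth.continuous_fderiv (by norm_cast))
  have hcont : Continuous fun x : 𝔼 => ‖gradient φ x‖ ^ 2 := hgc.norm.pow 2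
  have hint : Integrable (fun x : 𝔼 => ‖gradient φ x‖ ^ 2) volume := by
    have heq : (fun x : 𝔼 => ‖gradient φ x‖) = fun x => ‖iteratedFDeriv ℝ 1 φ x‖ :=
      funext fun x => norm_gradient_eq_iterated φ x
    have h' : MemLp (fun x : 𝔼 => ‖gradient φ x‖) 2 volume := by rw [heq]; exact h1.norm
    exact h'.integrable_sq
  have hpos : 0 < ∫ x, ‖gradient φ x‖ ^ 2 := by
    rw [integral_pos_iff_support_of_nonneg_ae
      (Filter.Eventually.of_forall fun x => sq_nonneg _) hint]
    obtain ⟨x₀, hx₀⟩ := hgrad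
    have hopen : IsOpen (Function.support fun x : 𝔼 => ‖gradient φ x‖ ^ 2) := by
      rw [Function.support_eq_preimage]
      exact isOpen_compl_singleton.preimage hcont
    refine hopen.measure_pos volume ⟨x₀, ?_⟩
    simp only [Function.mem_support]
    exact pow_ne_zero _ (norm_ne_zero_iff.2 hx₀)
  have : MLP φ = (2/3) * ∫ x, ‖gradient φ x‖ ^ 2 := rfl
  rw [this]
  exact mul_pos (by norm_num) hpos


/-- There is `C > 0` depending only on `φ` with
`‖Π₁ w_{P,y}‖² ≤ C (|y|⁴ + α⁻⁴ |P|² |y|²)` for all `α > 0` and `P, y ∈ ℝ³`. -/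
theorem Pi1_wP_normSq_le (hsmooth : ContDiff ℝ (⊤ : ℕ∞) φ)
    (hradial : ∀ x y : EuclideanSpace ℝ (Fin 3), ‖x‖ = ‖y‖ → φ x = φ y)
    (hL2 : ∀ k : ℕ, k ≤ 4 → MemLp (iteratedFDeriv ℝ k φ) 2 volume)
    (hgrad : ∃ x, gradient φ x ≠ 0) :
    ∃ C > 0, ∀ α : ℝ, 0 < α → ∀ P y : EuclideanSpace ℝ (Fin 3),
      Pi1NormSq φ (wP φ α P y) ≤
        C * (‖y‖ ^ 4 + ‖P‖ ^ 2 * ‖y‖ ^ 2 / α ^ 4) := by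
  have hB := B_cont hsmooth
  have hM : 0 < MLP φ := MLP_pos φ hsmooth (hL2 1 (by norm_num)) hgrad
  set K : ℝ := (∫⁻ x, ENNReal.ofReal (‖iteratedFDeriv ℝ 2 φ x‖ ^ 2)).toReal with hK
  have hK2top := K2_ne_top (f := φ) (hL2 2 (by norm_num))
  have hK0 : 0 ≤ K := ENNReal.toReal_nonneg
  refine ⟨(K + 1) * (1 + ((MLP φ)⁻¹) ^ 2), by positivity, ?_⟩
  intro α hα P y
  set k : ℝ := (α ^ 2 * MLP φ)⁻¹ with hk
  have hbdd : BddBelow (Set.range fun c : Fin 3 → ℂ => ∫ z, ‖wP φ α P y z - ∑ i : Fin 3,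
      c i * (fderiv ℝ φ z (EuclideanSpace.single i (1 : ℝ)) : ℂ)‖ ^ 2) := by
    refine ⟨0, ?_⟩
    rintro b ⟨c, rfl⟩
    exact integral_nonneg fun z => by positivity
  have hsum : ∀ z : 𝔼, (∑ i : Fin 3, ((y i : ℝ) : ℂ) *
      (fderiv ℝ φ z (EuclideanSpace.single i (1 : ℝ)) : ℂ)) = ((fderiv ℝ φ z y : ℝ) : ℂ) := by
    intro z
    have h1 : fderiv ℝ φ z y
        = ∑ i : Fin 3, y i * fderiv ℝ φ z (EuclideanSpace.single i (1:ℝ)) := by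
      conv_lhs => rw [← sum_single y]
      rw [map_sum]
      simp [smul_eq_mul]
    rw [h1]
    push_cast
    ring
  have hpt : ∀ z : 𝔼, ‖wP φ α P y z - ∑ i : Fin 3, ((y i : ℝ) : ℂ) *
      (fderiv ℝ φ z (EuclideanSpace.single i (1 : ℝ)) : ℂ)‖ ^ 2
      = (φ z - φ (z - y) - fderiv ℝ φ z y) ^ 2
        + (k * (fderiv ℝ φ z P - fderiv ℝ φ (z - y) P)) ^ 2 := by
    intro z
    rw [hsum z]
    have hrepr : wP φ α P y z - ((fderiv ℝ φ z y : ℝ) : ℂ) =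
        ((φ z - φ (z - y) - fderiv ℝ φ z y : ℝ) : ℂ) +
          Complex.I * ((k * (fderiv ℝ φ z P - fderiv ℝ φ (z - y) P) : ℝ) : ℂ) := by
      simp only [wP, phiP, xiP, hk]
      push_cast
      ring
    rw [hrepr, norm_add_I_mul_sq]
  set G : 𝔼 → ℝ := fun z => ∫ t in (0:ℝ)..1, ‖iteratedFDeriv ℝ 2 φ (z - t • y)‖ with hG
  set c₀ : ℝ := ‖y‖ ^ 4 + k ^ 2 * (‖P‖ ^ 2 * ‖y‖ ^ 2) with hc₀
  have hc₀0 : 0 ≤ c₀ := by positivity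
  have hFb : ∀ z : 𝔼, (φ z - φ (z - y) - fderiv ℝ φ z y) ^ 2
      + (k * (fderiv ℝ φ z P - fderiv ℝ φ (z - y) P)) ^ 2 ≤ c₀ * G z ^ 2 := by
    intro z
    have h1 := taylor_bound hsmooth z y
    have h2 := diff_bound hsmooth z y P
    have hG0 : 0 ≤ G z := intervalIntegral.integral_nonneg zero_le_one fun t _ => norm_nonneg _
    have e1 : (φ z - φ (z - y) - fderiv ℝ φ z y) ^ 2 ≤ (‖y‖ * ‖y‖ * G z) ^ 2 := by
      rw [← sq_abs]
      exact pow_le_pow_left₀ (abs_nonneg _) h1 2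
    have e2 : (fderiv ℝ φ z P - fderiv ℝ φ (z - y) P) ^ 2 ≤ (‖P‖ * ‖y‖ * G z) ^ 2 := by
      rw [← sq_abs]
      exact pow_le_pow_left₀ (abs_nonneg _) h2 2
    have e2' : k ^ 2 * (fderiv ℝ φ z P - fderiv ℝ φ (z - y) P) ^ 2
        ≤ k ^ 2 * (‖P‖ * ‖y‖ * G z) ^ 2 := mul_le_mul_of_nonneg_left e2 (sq_nonneg k)
    rw [hc₀]
    nlinarith [e1, e2']
  have hφc := hsmooth.continuous
  have ht : Continuous fun z : 𝔼 => z - y := continuous_id.sub continuous_const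
  have hRcont : Continuous fun z : 𝔼 => (φ z - φ (z - y) - fderiv ℝ φ z y) ^ 2
      + (k * (fderiv ℝ φ z P - fderiv ℝ φ (z - y) P)) ^ 2 :=
    (((hφc.sub (hφc.comp ht)).sub (continuous_fderiv_apply hsmooth y)).pow 2).add
      ((continuous_const.mul ((continuous_fderiv_apply hsmooth P).sub
        ((continuous_fderiv_apply hsmooth P).comp ht))).pow 2)
  have harith : c₀ * K ≤ (K + 1) * (1 + ((MLP φ)⁻¹) ^ 2) *
      (‖y‖ ^ 4 + ‖P‖ ^ 2 * ‖y‖ ^ 2 / α ^ 4) := by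
    have hα4 : (0:ℝ) < α ^ 4 := by positivity
    have hkk : k ^ 2 = ((MLP φ)⁻¹) ^ 2 * (1 / α ^ 4) := by
      rw [hk]
      field_simp
    rw [hc₀, hkk]
    have hA : (0:ℝ) ≤ ‖y‖ ^ 4 := by positivity
    have hD : (0:ℝ) ≤ ‖P‖ ^ 2 * ‖y‖ ^ 2 / α ^ 4 := by positivity
    have hm : (0:ℝ) ≤ ((MLP φ)⁻¹) ^ 2 := sq_nonneg _
    have hDD : ((MLP φ)⁻¹) ^ 2 * (1 / α ^ 4) * (‖P‖ ^ 2 * ‖y‖ ^ 2)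
        = ((MLP φ)⁻¹) ^ 2 * (‖P‖ ^ 2 * ‖y‖ ^ 2 / α ^ 4) := by ring
    rw [hDD]
    nlinarith [mul_nonneg hK0 hA, mul_nonneg hK0 hD, mul_nonneg hm hA, mul_nonneg hm hD,
      mul_nonneg (mul_nonneg hK0 hm) hA, mul_nonneg (mul_nonneg hK0 hm) hD]
  have key : (∫ z, ‖wP φ α P y z - ∑ i : Fin 3, ((y i : ℝ) : ℂ) *
      (fderiv ℝ φ z (EuclideanSpace.single i (1 : ℝ)) : ℂ)‖ ^ 2)
      ≤ (K + 1) * (1 + ((MLP φ)⁻¹) ^ 2) * (‖y‖ ^ 4 + ‖P‖ ^ 2 * ‖y‖ ^ 2 / α ^ 4) := by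
    rw [integral_congr_ae (Filter.Eventually.of_forall hpt)]
    rw [integral_eq_lintegral_of_nonneg_ae
      (Filter.Eventually.of_forall fun z => add_nonneg (sq_nonneg _) (sq_nonneg _))
      hRcont.aestronglyMeasurable]
    refine ENNReal.toReal_le_of_le_ofReal (by positivity) ?_
    calc ∫⁻ z, ENNReal.ofReal ((φ z - φ (z - y) - fderiv ℝ φ z y) ^ 2
          + (k * (fderiv ℝ φ z P - fderiv ℝ φ (z - y) P)) ^ 2)
        ≤ ∫⁻ z, ENNReal.ofReal (c₀ * G z ^ 2) :=
          lintegral_mono fun z => ENNReal.ofReal_le_ofReal (hFb z)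
      _ = ∫⁻ z, ENNReal.ofReal c₀ * ENNReal.ofReal (G z ^ 2) := by
          simp_rw [ENNReal.ofReal_mul hc₀0]
      _ = ENNReal.ofReal c₀ * ∫⁻ z, ENNReal.ofReal (G z ^ 2) :=
          lintegral_const_mul' _ _ ENNReal.ofReal_ne_top
      _ ≤ ENNReal.ofReal c₀ * ∫⁻ x, ENNReal.ofReal (‖iteratedFDeriv ℝ 2 φ x‖ ^ 2) :=
          mul_le_mul_right (core_lintegral hsmooth y) _
      _ = ENNReal.ofReal c₀ * ENNReal.ofReal K := by rw [hK, ENNReal.ofReal_toReal hK2top]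
      _ = ENNReal.ofReal (c₀ * K) := (ENNReal.ofReal_mul hc₀0).symm
      _ ≤ ENNReal.ofReal ((K + 1) * (1 + ((MLP φ)⁻¹) ^ 2) *
            (‖y‖ ^ 4 + ‖P‖ ^ 2 * ‖y‖ ^ 2 / α ^ 4)) := ENNReal.ofReal_le_ofReal harith
  exact (ciInf_le hbdd fun i => ((y i : ℝ) : ℂ)).trans key

end PolaronStmt11
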